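/- arXiv:1102.5204 — 2 statements merged into one kernel-verified Lean document; each statement's English description precedes it below -/
import Mathlib

section
/- Let ε ∈ [0,1] be a real number, let r ≥ 2 and l₁, l₂ ≥ 1 be natural numbers. Define the bilayer density evolution sequences p₁, p₂, q₁, q₂ by p₁(0) = p₂(0) = ε, qⱼ(i) = 1 − (1 − pⱼ(i))^(r−1), p₁(i+1) = ε·(q₁(i))^(l₁−1)·(q₂(i))^(l₂), p₂(i+1) = ε·(q₁(i))^(l₁)·(q₂(i))^(l₂−1); and define the single-layer density evolution sequence p by p(0) = ε and p(i+1) = ε·(1 − (1 − p(i))^(r−1))^(l₁+l₂−1). Then p₁(i) = p(i) for every i ≥ 0. -/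
/-!
Both layers start at `ε`, and on the diagonal `p₁ = p₂` each bilayer update collapses to the
single-layer update, because the exponents `(l₁ - 1) + l₂` and `l₁ + (l₂ - 1)` both equal
`l₁ + l₂ - 1`. Hence by induction both layers stay equal to the single-layer sequence.
-/

theorem coupled_recurrence_eq_of_diagonal {α : Type*} {x y z : ℕ → α} {f g : α → α → α}
    {F : α → α} (hf : ∀ t, f t t = F t) (hg : ∀ t, g t t = F t)
    (hx : ∀ i, x (i + 1) = f (x i) (y i)) (hy : ∀ i, y (i + 1) = g (x i) (y i))
    (hz : ∀ i, z (i + 1) = F (z i)) (hx0 : x 0 = z 0) (hy0 : y 0 = z 0) :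
    ∀ i, x i = z i ∧ y i = z i
  | 0 => ⟨hx0, hy0⟩
  | i + 1 => by
    obtain ⟨hxi, hyi⟩ := coupled_recurrence_eq_of_diagonal hf hg hx hy hz hx0 hy0 i
    exact ⟨by rw [hx, hz, hxi, hyi, hf], by rw [hy, hz, hxi, hyi, hg]⟩

theorem bilayer_de_eq_single_layer_general (ε : ℝ)
    (r l₁ l₂ : ℕ) (hl₁ : 1 ≤ l₁) (hl₂ : 1 ≤ l₂)
    (p₁ p₂ q₁ q₂ p : ℕ → ℝ)
    (hp₁0 : p₁ 0 = ε) (hp₂0 : p₂ 0 = ε)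
    (hq₁ : ∀ i, q₁ i = 1 - (1 - p₁ i) ^ (r - 1))
    (hq₂ : ∀ i, q₂ i = 1 - (1 - p₂ i) ^ (r - 1))
    (hp₁ : ∀ i, p₁ (i + 1) = ε * (q₁ i) ^ (l₁ - 1) * (q₂ i) ^ l₂)
    (hp₂ : ∀ i, p₂ (i + 1) = ε * (q₁ i) ^ l₁ * (q₂ i) ^ (l₂ - 1))
    (hp0 : p 0 = ε)
    (hp : ∀ i, p (i + 1) = ε * (1 - (1 - p i) ^ (r - 1)) ^ (l₁ + l₂ - 1)) :
    ∀ i, p₁ i = p i := by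
  set q : ℝ → ℝ := fun t => 1 - (1 - t) ^ (r - 1)
  refine fun i => (coupled_recurrence_eq_of_diagonal (x := p₁) (y := p₂) (z := p)
    (f := fun a b => ε * q a ^ (l₁ - 1) * q b ^ l₂)
    (g := fun a b => ε * q a ^ l₁ * q b ^ (l₂ - 1))
    (F := fun t => ε * q t ^ (l₁ + l₂ - 1)) ?_ ?_ ?_ ?_ hp ?_ ?_ i).1
  · exact fun t => by rw [mul_assoc, ← pow_add, ← Nat.sub_add_comm hl₁]
  · exact fun t => by rw [mul_assoc, ← pow_add, ← Nat.add_sub_assoc hl₂]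
  · exact fun i => by rw [hp₁, hq₁, hq₂]
  · exact fun i => by rw [hp₂, hq₁, hq₂]
  · rw [hp₁0, hp0]
  · rw [hp₂0, hp0]

/-- The bilayer density evolution sequence `p₁` coincides with the single-layer
density evolution sequence `p` of the `{l₁+l₂, r, L, w}` ensemble. -/
theorem bilayer_de_eq_single_layer (ε : ℝ) (hε : ε ∈ Set.Icc (0 : ℝ) 1)
    (r l₁ l₂ : ℕ) (hr : 2 ≤ r) (hl₁ : 1 ≤ l₁) (hl₂ : 1 ≤ l₂)
    (p₁ p₂ q₁ q₂ p : ℕ → ℝ)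
    (hp₁0 : p₁ 0 = ε) (hp₂0 : p₂ 0 = ε)
    (hq₁ : ∀ i, q₁ i = 1 - (1 - p₁ i) ^ (r - 1))
    (hq₂ : ∀ i, q₂ i = 1 - (1 - p₂ i) ^ (r - 1))
    (hp₁ : ∀ i, p₁ (i + 1) = ε * (q₁ i) ^ (l₁ - 1) * (q₂ i) ^ l₂)
    (hp₂ : ∀ i, p₂ (i + 1) = ε * (q₁ i) ^ l₁ * (q₂ i) ^ (l₂ - 1))
    (hp0 : p 0 = ε)
    (hp : ∀ i, p (i + 1) = ε * (1 - (1 - p i) ^ (r - 1)) ^ (l₁ + l₂ - 1)) :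
    ∀ i, p₁ i = p i :=
  bilayer_de_eq_single_layer_general ε r l₁ l₂ hl₁ hl₂ p₁ p₂ q₁ q₂ p hp₁0 hp₂0 hq₁ hq₂ hp₁ hp₂ hp0
    hp
end

section
/- Let ε ∈ [0,1] be a real number, let r ≥ 2 and l₁, l₂ ≥ 1 be natural numbers. Let p₁ be the bilayer density evolution sequence defined by p₁(0) = p₂(0) = ε, qⱼ(i) = 1 − (1 − pⱼ(i))^(r−1), p₁(i+1) = ε·(q₁(i))^(l₁−1)·(q₂(i))^(l₂), p₂(i+1) = ε·(q₁(i))^(l₁)·(q₂(i))^(l₂−1), and let p be the single-layer sequence defined by p(0) = ε and p(i+1) = ε·(1 − (1 − p(i))^(r−1))^(l₁+l₂−1). Then p₁(i) tends to 0 as i → ∞ if and only if p(i) tends to 0 as i → ∞. -/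
/-!
With the same initial value in both layers, the two bilayer recursions coincide: if `p₁ i = p₂ i`
then both updates multiply `ε` by the same check-node factor raised to `(l₁ - 1) + l₂`, resp.
`l₁ + (l₂ - 1)`, which both equal `l₁ + l₂ - 1`. By induction the bilayer sequences are the
single-layer sequence itself, so their limits agree trivially.
-/

theorem bilayer_recursion_eq_single {M : Type*} [CommMonoid M] {ε : M} {f : M → M}
    {l₁ l₂ : ℕ} (hl₁ : 1 ≤ l₁) (hl₂ : 1 ≤ l₂) {p₁ p₂ p : ℕ → M}
    (hp₁0 : p₁ 0 = p 0) (hp₂0 : p₂ 0 = p 0)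
    (hp₁ : ∀ i, p₁ (i + 1) = ε * f (p₁ i) ^ (l₁ - 1) * f (p₂ i) ^ l₂)
    (hp₂ : ∀ i, p₂ (i + 1) = ε * f (p₁ i) ^ l₁ * f (p₂ i) ^ (l₂ - 1))
    (hp : ∀ i, p (i + 1) = ε * f (p i) ^ (l₁ + l₂ - 1)) (i : ℕ) :
    p₁ i = p i ∧ p₂ i = p i := by
  induction i with
  | zero => exact ⟨hp₁0, hp₂0⟩
  | succ n ih =>
    rw [hp₁, hp₂, hp, ih.1, ih.2, mul_assoc, mul_assoc, ← pow_add, ← pow_add]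
    constructor <;> congr 2 <;> omega

theorem bilayer_de_tendsto_zero_iff_general (ε : ℝ)
    (r l₁ l₂ : ℕ) (hl₁ : 1 ≤ l₁) (hl₂ : 1 ≤ l₂)
    (p₁ p₂ q₁ q₂ p : ℕ → ℝ)
    (hp₁0 : p₁ 0 = ε) (hp₂0 : p₂ 0 = ε)
    (hq₁ : ∀ i, q₁ i = 1 - (1 - p₁ i) ^ (r - 1))
    (hq₂ : ∀ i, q₂ i = 1 - (1 - p₂ i) ^ (r - 1))
    (hp₁ : ∀ i, p₁ (i + 1) = ε * (q₁ i) ^ (l₁ - 1) * (q₂ i) ^ l₂)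
    (hp₂ : ∀ i, p₂ (i + 1) = ε * (q₁ i) ^ l₁ * (q₂ i) ^ (l₂ - 1))
    (hp0 : p 0 = ε)
    (hp : ∀ i, p (i + 1) = ε * (1 - (1 - p i) ^ (r - 1)) ^ (l₁ + l₂ - 1)) :
    Filter.Tendsto p₁ Filter.atTop (nhds 0) ↔
      Filter.Tendsto p Filter.atTop (nhds 0) := by
  have hp₁_eq : p₁ = p := funext fun i =>
    (bilayer_recursion_eq_single (M := ℝ) (f := fun x => 1 - (1 - x) ^ (r - 1)) hl₁ hl₂
      (hp₁0.trans hp0.symm) (hp₂0.trans hp0.symm)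
      (fun i => by rw [hp₁, hq₁, hq₂]) (fun i => by rw [hp₂, hq₁, hq₂]) hp i).1
  rw [hp₁_eq]

/-- The bilayer density evolution sequence `p₁` converges to `0` iff the
single-layer density evolution sequence `p` of the `{l₁+l₂, r, L, w}` ensemble
converges to `0`; hence the two ensembles have the same BP threshold. -/
theorem bilayer_de_tendsto_zero_iff (ε : ℝ) (hε : ε ∈ Set.Icc (0 : ℝ) 1)
    (r l₁ l₂ : ℕ) (hr : 2 ≤ r) (hl₁ : 1 ≤ l₁) (hl₂ : 1 ≤ l₂)
    (p₁ p₂ q₁ q₂ p : ℕ → ℝ)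
    (hp₁0 : p₁ 0 = ε) (hp₂0 : p₂ 0 = ε)
    (hq₁ : ∀ i, q₁ i = 1 - (1 - p₁ i) ^ (r - 1))
    (hq₂ : ∀ i, q₂ i = 1 - (1 - p₂ i) ^ (r - 1))
    (hp₁ : ∀ i, p₁ (i + 1) = ε * (q₁ i) ^ (l₁ - 1) * (q₂ i) ^ l₂)
    (hp₂ : ∀ i, p₂ (i + 1) = ε * (q₁ i) ^ l₁ * (q₂ i) ^ (l₂ - 1))
    (hp0 : p 0 = ε)
    (hp : ∀ i, p (i + 1) = ε * (1 - (1 - p i) ^ (r - 1)) ^ (l₁ + l₂ - 1)) :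
    Filter.Tendsto p₁ Filter.atTop (nhds 0) ↔
      Filter.Tendsto p Filter.atTop (nhds 0) :=
  bilayer_de_tendsto_zero_iff_general ε r l₁ l₂ hl₁ hl₂ p₁ p₂ q₁ q₂ p hp₁0 hp₂0 hq₁ hq₂ hp₁ hp₂ hp0
    hp
end
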